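/- arXiv:1506.08405 — 3 statements merged into one kernel-verified Lean document; each statement's English description precedes it below -/
import Mathlib

section
/- Let K be a field of characteristic zero, let n ≥ 0 be an integer, d ∈ ℤ, and let t, x ∈ K with t ≠ 0. Assume that for every integer i with 0 ≤ i ≤ n−1 one has 1 − i·x·t ≠ 0 and 1 − (d−i)·x·t ≠ 0. Then Σ_{k=0}^{n} [ ∏_{i=1}^{k} ( (1 − (i−1)·x·t) · (i t) )^{−1} ] · [ ∏_{i=1}^{n−k} ( (1 + ((i−1) − d)·x·t) · (−i t) )^{−1} ] = C(2n−2−d, n) · xⁿ / ∏_{i=0}^{n−1} ( (1 − (d−i)·x·t) · (1 − i·x·t) ), where C(m, n) := (∏_{j=0}^{n−1} (m − j)) / n! ∈ ℚ denotes the generalized binomial coefficient for m ∈ ℤ, viewed in K via the ℚ-algebra structure. -/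
open Finset


/-- The generalized binomial coefficient `C(m, n) = (∏_{j=0}^{n−1} (m − j)) / n!`
for `m : ℤ`, viewed in a field `K` of characteristic zero. -/
noncomputable def genBinom (K : Type*) [Field K] [CharZero K] (m : ℤ) (n : ℕ) : K :=
  (∏ j ∈ Finset.range n, ((m : K) - (j : K))) / (n.factorial : K)

open Finset in
theorem keyLemma {R : Type*} [CommRing R] (y : R) :
    ∀ (n : ℕ) (a e : R),
    ∑ k ∈ range (n + 1), (-1 : R) ^ k * (n.choose k : R) *
        (∏ i ∈ Ico k n, (1 - (a + i) * y)) * (∏ i ∈ range k, (1 - (e + i) * y))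
      = y ^ n * ∏ j ∈ range n, (e - a - j) := by
  intro n
  induction n with
  | zero => intro a e; simp
  | succ n IH =>
    intro a e
    have pascal : ∀ k : ℕ, ((n+1).choose (k+1) : R) = (n.choose k : R) + (n.choose (k+1) : R) := by
      intro k; rw [Nat.choose_succ_succ]; push_cast; ring
    -- peel off k = 0
    rw [Finset.sum_range_succ']
    have split : ∀ i ∈ range (n+1),
        (-1 : R) ^ (i+1) * ((n+1).choose (i+1) : R) *
          (∏ j ∈ Ico (i+1) (n+1), (1 - (a + j) * y)) * (∏ j ∈ range (i+1), (1 - (e + j) * y))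
        = (-(1 - e*y)) * ((-1:R)^i * (n.choose i : R) *
            (∏ j ∈ Ico i n, (1 - ((a+1) + j) * y)) * (∏ j ∈ range i, (1 - ((e+1) + j) * y)))
          + ((-1:R)^(i+1) * (n.choose (i+1) : R) *
            (∏ j ∈ Ico (i+1) (n+1), (1 - (a + j) * y)) * (∏ j ∈ range (i+1), (1 - (e + j) * y))) := by
      intro i _
      rw [pascal]
      have hIco : (∏ j ∈ Ico (i+1) (n+1), (1 - (a + j) * y))
          = ∏ j ∈ Ico i n, (1 - ((a+1) + j) * y) := by
        rw [prod_Ico_eq_prod_range, prod_Ico_eq_prod_range]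
        simp only [Nat.succ_sub_succ]
        refine Finset.prod_congr rfl fun j _ => ?_
        push_cast; ring_nf
      have hQ : (∏ j ∈ range (i+1), (1 - (e + j) * y))
          = (1 - e*y) * ∏ j ∈ range i, (1 - ((e+1) + j) * y) := by
        rw [Finset.prod_range_succ']
        simp only [Nat.cast_add, Nat.cast_one, Nat.cast_zero]
        rw [mul_comm]
        congr 1
        · simp
        · refine Finset.prod_congr rfl fun j _ => ?_; push_cast; ring_nf
      rw [hIco, hQ]
      ring
    rw [Finset.sum_congr rfl split, Finset.sum_add_distrib, ← Finset.mul_sum, IH (a+1) (e+1)]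
    -- second piece plus the k=0 term reassembles the full f' sum
    have reassemble :
        (∑ i ∈ range (n+1), ((-1:R)^(i+1) * (n.choose (i+1) : R) *
            (∏ j ∈ Ico (i+1) (n+1), (1 - (a + j) * y)) * (∏ j ∈ range (i+1), (1 - (e + j) * y))))
          + ((-1:R)^0 * ((n+1).choose 0 : R) *
            (∏ j ∈ Ico 0 (n+1), (1 - (a + j) * y)) * (∏ j ∈ range 0, (1 - (e + j) * y)))
        = ∑ k ∈ range (n+2), ((-1:R)^k * (n.choose k : R) *
            (∏ j ∈ Ico k (n+1), (1 - (a + j) * y)) * (∏ j ∈ range k, (1 - (e + j) * y))) := by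
      rw [Finset.sum_range_succ' (fun k => (-1:R)^k * (n.choose k : R) *
            (∏ j ∈ Ico k (n+1), (1 - (a + j) * y)) * (∏ j ∈ range k, (1 - (e + j) * y))) (n+1)]
      simp
    rw [add_assoc, reassemble]
    rw [Finset.sum_range_succ]
    have hzero : ((n.choose (n+1) : R)) = 0 := by
      have : n.choose (n+1) = 0 := Nat.choose_eq_zero_of_lt (Nat.lt_succ_self n)
      rw [this, Nat.cast_zero]
    rw [hzero]
    have htop : ∀ k ∈ range (n+1),
        ((-1:R)^k * (n.choose k : R) *
            (∏ j ∈ Ico k (n+1), (1 - (a + j) * y)) * (∏ j ∈ range k, (1 - (e + j) * y)))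
        = ((-1:R)^k * (n.choose k : R) *
            (∏ j ∈ Ico k n, (1 - (a + j) * y)) * (∏ j ∈ range k, (1 - (e + j) * y))) * (1 - (a+n)*y) := by
      intro k hk
      rw [Finset.prod_Ico_succ_top (Nat.lt_succ_iff.mp (mem_range.mp hk))]
      ring
    rw [Finset.sum_congr rfl htop, ← Finset.sum_mul, IH a e]
    have hp : (∏ j ∈ range (n+1), (e - a - (j:R))) = (∏ j ∈ range n, (e - a - (j:R))) * (e - a - (n:R)) :=
      Finset.prod_range_succ _ _
    rw [hp]
    have hfix : (∏ j ∈ range n, ((e+1) - (a+1) - (j:R))) = ∏ j ∈ range n, (e - a - (j:R)) :=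
      Finset.prod_congr rfl fun j _ => by ring
    rw [hfix]
    ring

/-- The localization formula for the equivariant Segre numbers:
`Σ_{k=0}^{n} [∏_{i=1}^{k} ((1 − (i−1)xt)(it))⁻¹] · [∏_{i=1}^{n−k} ((1 + ((i−1)−d)xt)(−it))⁻¹]
 = C(2n−2−d, n) xⁿ / ∏_{i=0}^{n−1} ((1 − (d−i)xt)(1 − ixt))`. -/
theorem statement3 {K : Type*} [Field K] [CharZero K] (n : ℕ) (d : ℤ) (t x : K)
    (ht : t ≠ 0)
    (h1 : ∀ i : ℕ, i < n → 1 - (i : K) * x * t ≠ 0)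
    (h2 : ∀ i : ℕ, i < n → 1 - ((d : K) - (i : K)) * x * t ≠ 0) :
    ∑ k ∈ Finset.range (n + 1),
        (∏ i ∈ Finset.range k, ((1 - (i : K) * x * t) * (((i : K) + 1) * t))⁻¹) *
        (∏ i ∈ Finset.range (n - k),
          ((1 + ((i : K) - (d : K)) * x * t) * (-(((i : K) + 1) * t)))⁻¹)
      = genBinom K (2 * (n : ℤ) - 2 - d) n * x ^ n /
          ∏ i ∈ Finset.range n, ((1 - ((d : K) - (i : K)) * x * t) * (1 - (i : K) * x * t)) := by
  have hD : (∏ i ∈ Finset.range n, ((1 - ((d : K) - (i : K)) * x * t) * (1 - (i : K) * x * t))) ≠ 0 := by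
    rw [Finset.prod_ne_zero_iff]
    intro i hi
    exact mul_ne_zero (h2 i (mem_range.mp hi)) (h1 i (mem_range.mp hi))
  rw [eq_div_iff hD]
  have hfac : ((n.factorial : K)) ≠ 0 := Nat.cast_ne_zero.mpr (Nat.factorial_ne_zero n)
  have htn : (t : K) ^ n ≠ 0 := pow_ne_zero n ht
  apply mul_right_cancel₀ (mul_ne_zero hfac htn)
  rw [Finset.sum_mul, Finset.sum_mul]
  have termEq : ∀ k ∈ Finset.range (n + 1),
      ((∏ i ∈ Finset.range k, ((1 - (i : K) * x * t) * (((i : K) + 1) * t))⁻¹) *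
        (∏ i ∈ Finset.range (n - k),
          ((1 + ((i : K) - (d : K)) * x * t) * (-(((i : K) + 1) * t)))⁻¹)) *
        (∏ i ∈ Finset.range n, ((1 - ((d : K) - (i : K)) * x * t) * (1 - (i : K) * x * t))) *
        ((n.factorial : K) * t ^ n)
      = (-1 : K) ^ (n - k) * ((n.choose k : K) *
          (∏ i ∈ Ico k n, (1 - (i : K) * x * t)) *
          (∏ i ∈ Finset.range k, (1 - (((d : K) - (n : K) + 1) + (i : K)) * (x * t)))) := by
    intro k hk
    have hkn : k ≤ n := Nat.lt_succ_iff.mp (mem_range.mp hk)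
    -- names for the pieces
    have hA : (∏ i ∈ Finset.range k, ((1 - (i : K) * x * t) * (((i : K) + 1) * t))⁻¹)
        = ((∏ i ∈ Finset.range k, (1 - (i : K) * x * t)) * ((k.factorial : K) * t ^ k))⁻¹ := by
      rw [Finset.prod_inv_distrib]
      congr 1
      rw [Finset.prod_mul_distrib]
      congr 1
      rw [Finset.prod_mul_distrib, Finset.prod_const, Finset.card_range]
      congr 1
      rw [← Finset.prod_range_add_one_eq_factorial, Nat.cast_prod]
      exact Finset.prod_congr rfl fun i _ => by push_cast; ring
    have hB : (∏ i ∈ Finset.range (n - k),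
          ((1 + ((i : K) - (d : K)) * x * t) * (-(((i : K) + 1) * t)))⁻¹)
        = ((∏ i ∈ Finset.range (n - k), (1 - ((d : K) - (i : K)) * x * t)) *
            ((-1 : K) ^ (n - k) * (((n - k).factorial : K) * t ^ (n - k))))⁻¹ := by
      rw [Finset.prod_inv_distrib]
      congr 1
      rw [Finset.prod_mul_distrib]
      congr 1
      · exact Finset.prod_congr rfl fun i _ => by ring
      · have : ∀ i ∈ Finset.range (n - k), (-(((i : K) + 1) * t)) = (-1 : K) * (((i : K) + 1) * t) :=
          fun i _ => by ring
        rw [Finset.prod_congr rfl this, Finset.prod_mul_distrib, Finset.prod_const,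
          Finset.card_range]
        congr 1
        rw [Finset.prod_mul_distrib, Finset.prod_const, Finset.card_range]
        congr 1
        rw [← Finset.prod_range_add_one_eq_factorial, Nat.cast_prod]
        exact Finset.prod_congr rfl fun i _ => by push_cast; ring
    rw [hA, hB, ← mul_inv, mul_assoc]
    have hPk : (∏ i ∈ Finset.range k, (1 - (i : K) * x * t)) ≠ 0 :=
      Finset.prod_ne_zero_iff.mpr fun i hi => h1 i (lt_of_lt_of_le (mem_range.mp hi) hkn)
    have hQk : (∏ i ∈ Finset.range (n - k), (1 - ((d : K) - (i : K)) * x * t)) ≠ 0 :=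
      Finset.prod_ne_zero_iff.mpr fun i hi =>
        h2 i (lt_of_lt_of_le (mem_range.mp hi) (Nat.sub_le n k))
    have hkf : ((k.factorial : K)) ≠ 0 := Nat.cast_ne_zero.mpr (Nat.factorial_ne_zero k)
    have hnkf : (((n - k).factorial : K)) ≠ 0 := Nat.cast_ne_zero.mpr (Nat.factorial_ne_zero _)
    have hsgn : ((-1 : K) ^ (n - k)) ≠ 0 := pow_ne_zero _ (by norm_num)
    have hAB : ((∏ i ∈ Finset.range k, (1 - (i : K) * x * t)) * ((k.factorial : K) * t ^ k)) *
        ((∏ i ∈ Finset.range (n - k), (1 - ((d : K) - (i : K)) * x * t)) *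
            ((-1 : K) ^ (n - k) * (((n - k).factorial : K) * t ^ (n - k)))) ≠ 0 := by
      apply mul_ne_zero (mul_ne_zero hPk (mul_ne_zero hkf (pow_ne_zero _ ht)))
      exact mul_ne_zero hQk (mul_ne_zero hsgn (mul_ne_zero hnkf (pow_ne_zero _ ht)))
    rw [inv_mul_eq_iff_eq_mul₀ hAB]
    -- now an inverse-free identity; split the big products
    rw [Finset.prod_mul_distrib]
    have hDn2 : (∏ i ∈ Finset.range n, (1 - (i : K) * x * t))
        = (∏ i ∈ Finset.range k, (1 - (i : K) * x * t)) *
          (∏ i ∈ Ico k n, (1 - (i : K) * x * t)) :=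
      (Finset.prod_range_mul_prod_Ico _ hkn).symm
    have hDd2 : (∏ i ∈ Finset.range n, (1 - ((d : K) - (i : K)) * x * t))
        = (∏ i ∈ Finset.range (n - k), (1 - ((d : K) - (i : K)) * x * t)) *
          (∏ i ∈ Ico (n - k) n, (1 - ((d : K) - (i : K)) * x * t)) :=
      (Finset.prod_range_mul_prod_Ico _ (Nat.sub_le n k)).symm
    have hreflect : (∏ i ∈ Ico (n - k) n, (1 - ((d : K) - (i : K)) * x * t))
        = ∏ i ∈ Finset.range k, (1 - (((d : K) - (n : K) + 1) + (i : K)) * (x * t)) := by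
      rw [Finset.prod_Ico_eq_prod_range]
      rw [show n - (n - k) = k from by omega]
      rw [← Finset.prod_range_reflect (fun j => 1 - ((d : K) - ((n - k + j : ℕ) : K)) * x * t) k]
      refine Finset.prod_congr rfl fun j hj => ?_
      have hjk : j < k := mem_range.mp hj
      have h1n : 1 ≤ n := by omega
      rw [show n - k + (k - 1 - j) = n - 1 - j from by omega]
      have hc : ((n - 1 - j : ℕ) : K) = (n : K) - 1 - (j : K) := by
        have e1 : ((n - 1 - j : ℕ) : K) = ((n - 1 : ℕ) : K) - (j : K) :=
          Nat.cast_sub (by omega)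
        have e2 : ((n - 1 : ℕ) : K) = (n : K) - 1 := by
          rw [Nat.cast_sub h1n]; norm_num
        rw [e1, e2]
      rw [hc]; ring
    rw [hDn2, hDd2, hreflect]
    have hnfac : ((n.factorial : K)) = (n.choose k : K) * (k.factorial : K) * ((n - k).factorial : K) := by
      rw [← Nat.cast_mul, ← Nat.cast_mul]
      exact_mod_cast congrArg (Nat.cast (R := K)) (Nat.choose_mul_factorial_mul_factorial hkn).symm
    rw [hnfac, show (t : K) ^ n = t ^ k * t ^ (n - k) from by
      rw [← pow_add]; congr 1; omega]
    have hss : (-1 : K) ^ (n - k) * (-1 : K) ^ (n - k) = 1 := by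
      rw [← pow_add]
      exact Even.neg_one_pow ⟨n - k, rfl⟩
    linear_combination
      (-((∏ i ∈ Finset.range (n - k), (1 - ((d : K) - (i : K)) * x * t)) *
          (∏ i ∈ Finset.range k, (1 - (((d : K) - (n : K) + 1) + (i : K)) * (x * t))) *
          ((∏ i ∈ Finset.range k, (1 - (i : K) * x * t)) *
            (∏ i ∈ Ico k n, (1 - (i : K) * x * t))) *
          (((n.choose k : K) * (k.factorial : K) * ((n - k).factorial : K)) *
            (t ^ k * t ^ (n - k))))) * hss
  rw [Finset.sum_congr rfl termEq]
  have convEq : ∀ k ∈ Finset.range (n + 1),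
      (-1 : K) ^ (n - k) * ((n.choose k : K) *
          (∏ i ∈ Ico k n, (1 - (i : K) * x * t)) *
          (∏ i ∈ Finset.range k, (1 - (((d : K) - (n : K) + 1) + (i : K)) * (x * t))))
      = (-1 : K) ^ n * ((-1 : K) ^ k * (n.choose k : K) *
          (∏ i ∈ Ico k n, (1 - ((0 : K) + (i : K)) * (x * t))) *
          (∏ i ∈ Finset.range k, (1 - (((d : K) - (n : K) + 1) + (i : K)) * (x * t)))) := by
    intro k hk
    have hkn : k ≤ n := Nat.lt_succ_iff.mp (mem_range.mp hk)
    have hsign : (-1 : K) ^ (n - k) = (-1 : K) ^ n * (-1 : K) ^ k := by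
      have h2k : n + k = (n - k) + 2 * k := by omega
      calc (-1 : K) ^ (n - k) = (-1 : K) ^ (n - k) * ((-1 : K) ^ 2) ^ k := by norm_num
        _ = (-1 : K) ^ ((n - k) + 2 * k) := by rw [pow_add, pow_mul]
        _ = (-1 : K) ^ (n + k) := by rw [← h2k]
        _ = (-1 : K) ^ n * (-1 : K) ^ k := pow_add _ _ _
    rw [hsign]
    have hR : (∏ i ∈ Ico k n, (1 - (i : K) * x * t))
        = ∏ i ∈ Ico k n, (1 - ((0 : K) + (i : K)) * (x * t)) :=
      Finset.prod_congr rfl fun i _ => by ring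
    rw [hR]; ring
  rw [Finset.sum_congr rfl convEq, ← Finset.mul_sum,
    keyLemma (x * t) n 0 ((d : K) - (n : K) + 1)]
  -- final bookkeeping
  have hprod : (∏ j ∈ Finset.range n, (((2 * (n : ℤ) - 2 - d : ℤ) : K) - (j : K)))
      = ∏ j ∈ Finset.range n, ((-1 : K) * (((d : K) - (n : K) + 1) - 0 - (j : K))) := by
    rw [← Finset.prod_range_reflect (fun j => ((2 * (n : ℤ) - 2 - d : ℤ) : K) - (j : K)) n]
    refine Finset.prod_congr rfl fun j hj => ?_
    have hjn : j < n := mem_range.mp hj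
    have hc : ((n - 1 - j : ℕ) : K) = (n : K) - 1 - (j : K) := by
      have e1 : ((n - 1 - j : ℕ) : K) = ((n - 1 : ℕ) : K) - (j : K) :=
        Nat.cast_sub (by omega)
      have e2 : ((n - 1 : ℕ) : K) = (n : K) - 1 := by
        rw [Nat.cast_sub (by omega : 1 ≤ n)]; norm_num
      rw [e1, e2]
    rw [hc]
    push_cast
    ring
  rw [genBinom, hprod, Finset.prod_mul_distrib, Finset.prod_const, Finset.card_range]
  field_simp
  ring
end

section
/- Define a_n ∈ ℕ for n ≥ 0 by a_0 = 1, a_1 = 0, and a_n = binom(2n−2, n) for n ≥ 2 (equivalently a_n = Nat.choose (2n−2) n with truncated subtraction). Then for every real number z with 0 ≤ z < 1/4, the series Σ_{n=0}^{∞} a_n·zⁿ converges with sum (1 − 2z + √(1 − 4z)) / (2·√(1 − 4z)). -/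
open Real

lemma cb_le_four_pow (n : ℕ) : Nat.centralBinom n ≤ 4 ^ n := by
  calc Nat.centralBinom n = (2 * n).choose n := rfl
    _ ≤ (2 * n + 1).choose n := Nat.choose_le_choose n (Nat.le_succ _)
    _ ≤ 4 ^ n := Nat.choose_middle_le_pow n

lemma key_nat (n : ℕ) :
    Nat.centralBinom (n + 1) = 2 * (2 * n).choose (n + 1) + 2 * Nat.centralBinom n := by
  rcases n with _ | m
  · decide
  · have h1 : Nat.centralBinom (m + 2) = (2 * m + 3).choose (m + 1) + (2 * m + 3).choose (m + 2) := by
      have h : 2 * (m + 2) = (2 * m + 3) + 1 := by ring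
      rw [Nat.centralBinom, h]
      exact Nat.choose_succ_succ _ _
    have h2 : (2 * m + 3).choose (m + 1) = (2 * m + 2).choose m + (2 * m + 2).choose (m + 1) :=
      Nat.choose_succ_succ _ _
    have h3 : (2 * m + 3).choose (m + 2) = (2 * m + 2).choose (m + 1) + (2 * m + 2).choose (m + 2) :=
      Nat.choose_succ_succ _ _
    have h4 : (2 * m + 2).choose m = (2 * m + 2).choose (m + 2) := by
      have := Nat.choose_symm (n := 2 * m + 2) (k := m + 2) (by omega)
      simpa [show 2 * m + 2 - (m + 2) = m by omega] using this
    have h6 : Nat.centralBinom (m + 1) = (2 * m + 2).choose (m + 1) := by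
      rw [Nat.centralBinom]; ring_nf
    rw [show m + 1 + 1 = m + 2 from rfl, show 2 * (m + 1) = 2 * m + 2 from by ring,
      show m + 2 = m + 1 + 1 from rfl]
    rw [show m + 1 + 1 = m + 2 from rfl] at h1 ⊢
    omega

lemma cb_real_le (n : ℕ) : (Nat.centralBinom n : ℝ) ≤ 4 ^ n := by
  have h : Nat.centralBinom n ≤ 4 ^ n := by
    calc Nat.centralBinom n = (2 * n).choose n := rfl
      _ ≤ (2 * n + 1).choose n := Nat.choose_le_choose n (Nat.le_succ _)
      _ ≤ 4 ^ n := Nat.choose_middle_le_pow n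
  exact_mod_cast h

lemma summable_cb {x : ℝ} (hx : |x| < 1 / 4) :
    Summable (fun n : ℕ => (Nat.centralBinom n : ℝ) * x ^ n) := by
  apply Summable.of_norm_bounded (g := fun n => (4 * |x|) ^ n)
    (summable_geometric_of_lt_one (by positivity) (by linarith))
  intro n
  rw [norm_mul, norm_pow, mul_pow, Real.norm_natCast, Real.norm_eq_abs]
  gcongr
  exact cb_real_le n

/-- the generating function of central binomial coefficients -/
noncomputable def cbg (y : ℝ) : ℝ := ∑' n : ℕ, (Nat.centralBinom n : ℝ) * y ^ n

/-- the termwise derivative series -/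
noncomputable def cbg' (y : ℝ) : ℝ := ∑' n : ℕ, (Nat.centralBinom n : ℝ) * ((n : ℝ) * y ^ (n - 1))

lemma summable_u {r : ℝ} (hr0 : 0 < r) (hr4 : r < 1 / 4) :
    Summable (fun n : ℕ => 4 * ((n : ℝ) * (4 * r) ^ (n - 1))) := by
  apply Summable.mul_left
  rw [← summable_nat_add_iff 1]
  have hnorm : ‖4 * r‖ < 1 := by rw [Real.norm_eq_abs, abs_of_pos (by linarith)]; linarith
  have h1 := summable_pow_mul_geometric_of_norm_lt_one 1 hnorm
  have hgeo : Summable (fun n : ℕ => (4 * r) ^ n) :=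
    summable_geometric_of_lt_one (by linarith) (by linarith)
  apply (h1.add hgeo).congr
  intro n
  simp only [Nat.add_sub_cancel, pow_one]
  push_cast
  ring

lemma bound_deriv {r : ℝ} (n : ℕ) {y : ℝ} (hyr : |y| < r) :
    ‖(Nat.centralBinom n : ℝ) * ((n : ℝ) * y ^ (n - 1))‖ ≤ 4 * ((n : ℝ) * (4 * r) ^ (n - 1)) := by
  rcases n with _ | m
  · simp
  · have e1 : (Nat.centralBinom (m + 1) : ℝ) ≤ 4 ^ (m + 1) := cb_real_le _
    have e2 : |y| ^ m ≤ r ^ m := pow_le_pow_left₀ (abs_nonneg y) hyr.le m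
    have e3 : (0:ℝ) ≤ ((m + 1 : ℕ) : ℝ) := Nat.cast_nonneg _
    simp only [norm_mul, Real.norm_natCast, norm_pow, Real.norm_eq_abs, Nat.abs_cast,
      Nat.add_sub_cancel]
    calc (Nat.centralBinom (m + 1) : ℝ) * (((m + 1 : ℕ) : ℝ) * |y| ^ m)
        ≤ 4 ^ (m + 1) * (((m + 1 : ℕ) : ℝ) * r ^ m) := by
          apply mul_le_mul e1 (by apply mul_le_mul_of_nonneg_left e2 e3) (by positivity)
            (by positivity)
      _ = 4 * (((m + 1 : ℕ) : ℝ) * (4 * r) ^ (m + 1 - 1)) := by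
          simp only [Nat.add_sub_cancel, mul_pow]; ring

lemma hasDerivAt_cbg {r : ℝ} (hr0 : 0 < r) (hr4 : r < 1 / 4) {y : ℝ} (hy : |y| < r) :
    HasDerivAt cbg (cbg' y) y := by
  have hmem : y ∈ Metric.ball (0 : ℝ) r := by
    simpa [Real.dist_eq] using hy
  exact hasDerivAt_tsum_of_isPreconnected (summable_u hr0 hr4) Metric.isOpen_ball
    (convex_ball _ _).isPreconnected
    (fun n w _ => (hasDerivAt_pow n w).const_mul ((Nat.centralBinom n : ℝ)))
    (fun n w hw => bound_deriv n (by simpa [Real.dist_eq] using hw))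
    (Metric.mem_ball_self hr0)
    (summable_cb (by norm_num)) hmem

lemma ode_cbg {y : ℝ} (hy : |y| < 1 / 4) : (1 - 4 * y) * cbg' y = 2 * cbg y := by
  obtain ⟨r, hyr, hr4⟩ := exists_between hy
  have hr0 : 0 < r := lt_of_le_of_lt (abs_nonneg y) hyr
  have S' : Summable fun n : ℕ => (Nat.centralBinom n : ℝ) * ((n : ℝ) * y ^ (n - 1)) :=
    (summable_u hr0 hr4).of_norm_bounded (fun n => bound_deriv n hyr)
  have Sg : Summable fun n : ℕ => (Nat.centralBinom n : ℝ) * y ^ n := summable_cb hy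
  have hS' : HasSum (fun n : ℕ => (Nat.centralBinom n : ℝ) * ((n : ℝ) * y ^ (n - 1))) (cbg' y) :=
    S'.hasSum
  have h1 : HasSum (fun n : ℕ => (Nat.centralBinom (n + 1) : ℝ) * (((n : ℝ) + 1) * y ^ n))
      (cbg' y) := by
    have := (hasSum_nat_add_iff'
      (f := fun n : ℕ => (Nat.centralBinom n : ℝ) * ((n : ℝ) * y ^ (n - 1))) 1).mpr hS'
    simpa using this
  have h2 : HasSum (fun n : ℕ => 4 * (n : ℝ) * (Nat.centralBinom n : ℝ) * y ^ n)
      (4 * y * cbg' y) := by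
    have he : (fun n : ℕ => 4 * y * ((Nat.centralBinom n : ℝ) * ((n : ℝ) * y ^ (n - 1))))
        = fun n : ℕ => 4 * (n : ℝ) * (Nat.centralBinom n : ℝ) * y ^ n := by
      funext n
      rcases n with _ | m
      · simp
      · simp only [Nat.add_sub_cancel]
        push_cast
        ring
    have := hS'.mul_left (4 * y)
    rwa [he] at this
  have h3 := h1.sub h2
  have h4 : HasSum (fun n : ℕ => 2 * ((Nat.centralBinom n : ℝ) * y ^ n))
      (cbg' y - 4 * y * cbg' y) := by
    have he : (fun n : ℕ => (Nat.centralBinom (n + 1) : ℝ) * (((n : ℝ) + 1) * y ^ n)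
          - 4 * (n : ℝ) * (Nat.centralBinom n : ℝ) * y ^ n)
        = fun n : ℕ => 2 * ((Nat.centralBinom n : ℝ) * y ^ n) := by
      funext n
      have hkey : ((n : ℝ) + 1) * (Nat.centralBinom (n + 1) : ℝ)
          = 2 * (2 * (n : ℝ) + 1) * (Nat.centralBinom n : ℝ) := by
        exact_mod_cast congrArg (Nat.cast : ℕ → ℝ) (Nat.succ_mul_centralBinom_succ n)
      linear_combination y ^ n * hkey
    rwa [he] at h3
  have h5 : HasSum (fun n : ℕ => 2 * ((Nat.centralBinom n : ℝ) * y ^ n)) (2 * cbg y) :=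
    Sg.hasSum.mul_left 2
  have := h4.unique h5
  linarith

lemma cbg_zero : cbg 0 = 1 := by
  rw [cbg, tsum_eq_single 0 (fun n hn => by simp [zero_pow hn])]
  simp

lemma hasSum_cb {z : ℝ} (hz0 : 0 ≤ z) (hz1 : z < 1 / 4) :
    HasSum (fun n : ℕ => (Nat.centralBinom n : ℝ) * z ^ n) (Real.sqrt (1 - 4 * z))⁻¹ := by
  have hr0 : (0:ℝ) < (z + 1 / 4) / 2 := by linarith
  have hr4 : (z + 1 / 4) / 2 < 1 / 4 := by linarith
  have hzr : z < (z + 1 / 4) / 2 := by linarith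
  -- F is constant on [0, z]
  have hFd : ∀ x ∈ Set.Icc 0 z, HasDerivAt (fun w => cbg w * Real.sqrt (1 - 4 * w)) 0 x := by
    intro x hx
    obtain ⟨hx0, hxz⟩ := hx
    have hxr : |x| < (z + 1 / 4) / 2 := by rw [abs_of_nonneg hx0]; linarith
    have hx4 : (0:ℝ) < 1 - 4 * x := by linarith
    have hd1 := hasDerivAt_cbg hr0 hr4 hxr
    have hODE := ode_cbg (lt_trans hxr hr4)
    set s : ℝ := Real.sqrt (1 - 4 * x) with hs
    have hs0 : 0 < s := Real.sqrt_pos.mpr hx4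
    have hsq : s ^ 2 = 1 - 4 * x := Real.sq_sqrt hx4.le
    have inner : HasDerivAt (fun w : ℝ => 1 - 4 * w) (-4) x := by
      simpa using ((hasDerivAt_id x).const_mul (4:ℝ)).const_sub 1
    have comp : HasDerivAt (fun w : ℝ => Real.sqrt (1 - 4 * w)) (1 / (2 * s) * (-4)) x :=
      (Real.hasDerivAt_sqrt hx4.ne').comp x inner
    have hd := hd1.mul comp
    have hval : cbg' x * Real.sqrt (1 - 4 * x) + cbg x * (1 / (2 * s) * (-4)) = 0 := by
      have h1 : cbg' x * s = 2 * cbg x / s := by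
        rw [eq_div_iff hs0.ne']
        calc cbg' x * s * s = cbg' x * s ^ 2 := by ring
          _ = (1 - 4 * x) * cbg' x := by rw [hsq]; ring
          _ = 2 * cbg x := hODE
      rw [← hs, h1]
      field_simp
      ring
    rw [← hs] at hd
    rw [hval] at hd
    exact hd
  have hconst := constant_of_has_deriv_right_zero
    (f := fun w => cbg w * Real.sqrt (1 - 4 * w)) (a := 0) (b := z)
    (fun x hx => ((hFd x hx).continuousAt).continuousWithinAt)
    (fun x hx => ((hFd x (Set.mem_Icc_of_Ico hx)).hasDerivWithinAt))
    z (Set.right_mem_Icc.mpr hz0)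
  simp only [mul_zero, sub_zero, Real.sqrt_one, mul_one, cbg_zero] at hconst
  have hs0 : 0 < Real.sqrt (1 - 4 * z) := Real.sqrt_pos.mpr (by linarith)
  have hcz : cbg z = (Real.sqrt (1 - 4 * z))⁻¹ := by
    field_simp at hconst ⊢
    linarith [hconst]
  have := (summable_cb (x := z) (by rw [abs_of_nonneg hz0]; exact hz1)).hasSum
  rwa [← cbg, hcz] at this


/-- With `a_n = C(2n−2, n)` (natural-number truncated subtraction,
so `a_0 = 1`, `a_1 = 0`), for every real `z` with `0 ≤ z < 1/4`:
`Σ_{n≥0} a_n zⁿ = (1 − 2z + √(1−4z)) / (2√(1−4z))`. -/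
theorem statement5 (z : ℝ) (hz0 : 0 ≤ z) (hz1 : z < 1 / 4) :
    HasSum (fun n : ℕ => (Nat.choose (2 * n - 2) n : ℝ) * z ^ n)
      ((1 - 2 * z + Real.sqrt (1 - 4 * z)) / (2 * Real.sqrt (1 - 4 * z))) := by
  have hg := hasSum_cb hz0 hz1
  set s : ℝ := Real.sqrt (1 - 4 * z) with hs
  have hs0 : 0 < s := Real.sqrt_pos.mpr (by linarith)
  have h1 : HasSum (fun n : ℕ => (Nat.centralBinom (n + 1) : ℝ) * z ^ (n + 1)) (s⁻¹ - 1) := by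
    have := (hasSum_nat_add_iff'
      (f := fun n : ℕ => (Nat.centralBinom n : ℝ) * z ^ n) 1).mpr hg
    simpa [Nat.centralBinom] using this
  have h2 : HasSum (fun n : ℕ => (Nat.centralBinom n : ℝ) * z ^ (n + 1)) (z * s⁻¹) := by
    have he : (fun n : ℕ => z * ((Nat.centralBinom n : ℝ) * z ^ n))
        = fun n : ℕ => (Nat.centralBinom n : ℝ) * z ^ (n + 1) := by
      funext n; ring
    have := hg.mul_left z
    rwa [he] at this
  have h3 := (h1.sub (h2.mul_left 2)).mul_left 2⁻¹
  have he2 : (fun n : ℕ => 2⁻¹ * ((Nat.centralBinom (n + 1) : ℝ) * z ^ (n + 1)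
        - 2 * ((Nat.centralBinom n : ℝ) * z ^ (n + 1))))
      = fun n : ℕ => (Nat.choose (2 * (n + 1) - 2) (n + 1) : ℝ) * z ^ (n + 1) := by
    funext n
    have hk : (Nat.centralBinom (n + 1) : ℝ)
        = 2 * ((2 * n).choose (n + 1) : ℝ) + 2 * (Nat.centralBinom n : ℝ) := by
      exact_mod_cast congrArg (Nat.cast : ℕ → ℝ) (key_nat n)
    have hn : 2 * (n + 1) - 2 = 2 * n := by omega
    rw [hn]
    linear_combination 2⁻¹ * z ^ (n + 1) * hk
  rw [he2] at h3
  have hval : 2⁻¹ * ((s⁻¹ - 1) - 2 * (z * s⁻¹))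
      = (1 - 2 * z + s) / (2 * s)
        - ∑ i ∈ Finset.range 1, (Nat.choose (2 * i - 2) i : ℝ) * z ^ i := by
    norm_num
    field_simp
    ring
  rw [hval] at h3
  exact (hasSum_nat_add_iff' 1).mp h3
end

section
/- Let d and e be real numbers. For every real number k with 0 ≤ k < 1/2, the series S(k) := Σ_{n=1}^{∞} ((k(1−k))ⁿ/n)·( −binom(2n−1, n−1)·d + (4^{n−1} − binom(2n−1, n−1))·e ) converges, and exp(S(k)) = (1−k)^{e+d} · (1−2k)^{−e/2}, where the powers of the positive real numbers 1−k and 1−2k are real powers. -/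
open Finset MeasureTheory intervalIntegral

noncomputable def rr (n : ℕ) : ℝ := (Nat.centralBinom n : ℝ) / 4 ^ n

lemma rr_nonneg (n : ℕ) : 0 ≤ rr n := by
  unfold rr; positivity

lemma rr_rec (n : ℕ) : (2 * (n + 1) : ℝ) * rr (n + 1) = (2 * n + 1) * rr n := by
  have h := Nat.succ_mul_centralBinom_succ n
  have h' : ((n : ℝ) + 1) * (Nat.centralBinom (n + 1) : ℝ)
      = 2 * (2 * n + 1) * (Nat.centralBinom n : ℝ) := by exact_mod_cast congrArg (Nat.cast (R := ℝ)) h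
  unfold rr
  have h4 : (4 : ℝ) ^ (n + 1) = 4 * 4 ^ n := by ring
  field_simp [h4]
  linear_combination (2 * (4:ℝ) ^ n) * h'

lemma rr_conv : ∀ m : ℕ, ∑ i ∈ range (m + 1), rr i * rr (m - i) = 1 := by
  intro m
  induction m with
  | zero => simp [rr, Nat.centralBinom]
  | succ m ih =>
    -- reflection helper
    have refl : ∀ (n : ℕ) (c : ℕ → ℝ),
        ∑ i ∈ range (n + 1), c i * (rr i * rr (n - i))
          = ∑ i ∈ range (n + 1), c (n - i) * (rr i * rr (n - i)) := by
      intro n c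
      rw [← Finset.sum_range_reflect]
      refine Finset.sum_congr rfl ?_
      intro i hi
      have hi' : i ≤ n := Nat.lt_succ_iff.mp (Finset.mem_range.mp hi)
      have h1 : n + 1 - 1 - i = n - i := by omega
      have h2 : n - (n - i) = i := by omega
      rw [h1, h2]
      ring
    -- inner sum: ∑_{j≤m} 2j r_j r_{m-j} = m
    have inner : ∑ j ∈ range (m + 1), (2 * j : ℝ) * (rr j * rr (m - j)) = m := by
      have h2 : (2 : ℝ) * (∑ j ∈ range (m + 1), (2 * j : ℝ) * (rr j * rr (m - j))) = 2 * m := by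
        calc (2:ℝ) * ∑ j ∈ range (m + 1), (2 * j : ℝ) * (rr j * rr (m - j))
            = ∑ j ∈ range (m + 1), ((2 * j : ℝ) * (rr j * rr (m - j))
                + (2 * (m - j : ℕ) : ℝ) * (rr j * rr (m - j))) := by
              rw [Finset.sum_add_distrib]
              rw [refl m (fun i => (2 * i : ℝ))]
              · push_cast
                ring
          _ = ∑ j ∈ range (m + 1), (2 * m : ℝ) * (rr j * rr (m - j)) := by
              refine Finset.sum_congr rfl ?_
              intro j hj
              have hj' : j ≤ m := Nat.lt_succ_iff.mp (Finset.mem_range.mp hj)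
              rw [Nat.cast_sub hj']; ring
          _ = 2 * m := by rw [← Finset.mul_sum, ih, mul_one]
      linarith
    -- S1 = ∑_{i∈range(m+2)} 2i r_i r_{m+1-i} = m + 1
    have S1 : ∑ i ∈ range (m + 2), (2 * i : ℝ) * (rr i * rr (m + 1 - i)) = m + 1 := by
      have e1 : ∑ i ∈ range (m + 2), (2 * i : ℝ) * (rr i * rr (m + 1 - i))
          = ∑ i ∈ range (m + 1), (2 * ((i:ℝ) + 1)) * (rr (i+1) * rr (m - i)) := by
        rw [Finset.sum_range_succ' (fun i => (2 * (i:ℝ)) * (rr i * rr (m + 1 - i))) (m+1)]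
        simp only [Nat.cast_zero, mul_zero, zero_mul, add_zero]
        refine Finset.sum_congr rfl ?_
        intro i _
        have hs : m + 1 - (i + 1) = m - i := by omega
        rw [hs]; push_cast; ring
      have e2 : ∑ i ∈ range (m + 1), (2 * ((i:ℝ) + 1)) * (rr (i+1) * rr (m - i))
          = ∑ i ∈ range (m + 1), (2 * (i:ℝ) + 1) * (rr i * rr (m - i)) := by
        refine Finset.sum_congr rfl ?_
        intro i _
        calc (2 * ((i:ℝ) + 1)) * (rr (i+1) * rr (m - i))
            = ((2 * ((i:ℝ) + 1)) * rr (i+1)) * rr (m - i) := by ring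
          _ = ((2 * (i:ℝ) + 1) * rr i) * rr (m - i) := by rw [rr_rec]
          _ = (2 * (i:ℝ) + 1) * (rr i * rr (m - i)) := by ring
      have e3 : ∑ i ∈ range (m + 1), (2 * (i:ℝ) + 1) * (rr i * rr (m - i))
          = (∑ i ∈ range (m + 1), (2 * i : ℝ) * (rr i * rr (m - i)))
            + ∑ i ∈ range (m + 1), rr i * rr (m - i) := by
        rw [← Finset.sum_add_distrib]
        exact Finset.sum_congr rfl fun i _ => by ring
      rw [e1, e2, e3, inner, ih]
    -- conclude
    have main : (2 * ((m:ℝ) + 1)) * ∑ i ∈ range (m + 2), rr i * rr (m + 1 - i)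
        = 2 * ((m:ℝ) + 1) := by
      calc (2 * ((m:ℝ) + 1)) * ∑ i ∈ range (m + 2), rr i * rr (m + 1 - i)
          = ∑ i ∈ range (m + 2), ((2 * i : ℝ) * (rr i * rr (m + 1 - i))
              + (2 * ((m + 1 - i : ℕ)) : ℝ) * (rr i * rr (m + 1 - i))) := by
            rw [Finset.mul_sum]
            refine Finset.sum_congr rfl ?_
            intro i hi
            have hi' : i ≤ m + 1 := Nat.lt_succ_iff.mp (Finset.mem_range.mp hi)
            have : ((m + 1 - i : ℕ) : ℝ) = (m : ℝ) + 1 - i := by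
              push_cast [Nat.cast_sub hi']; ring
            rw [this]; ring
        _ = (∑ i ∈ range (m + 2), (2 * i : ℝ) * (rr i * rr (m + 1 - i)))
            + ∑ i ∈ range (m + 2), (2 * ((m + 1 - i : ℕ)) : ℝ) * (rr i * rr (m + 1 - i)) := by
            rw [Finset.sum_add_distrib]
        _ = 2 * ((m:ℝ) + 1) := by
            have hrefl := refl (m + 1) (fun i => (2 * i : ℝ))
            push_cast at hrefl ⊢
            rw [← hrefl, S1]; ring
    have hpos : (0:ℝ) < 2 * ((m:ℝ) + 1) := by positivity
    exact mul_left_cancel₀ (ne_of_gt hpos) (main.trans (mul_one _).symm)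


lemma rr_le_one (n : ℕ) : rr n ≤ 1 := by
  have h : Nat.centralBinom n ≤ 4 ^ n := by
    calc Nat.centralBinom n = (2 * n).choose n := rfl
      _ ≤ (2 * n + 1).choose n := Nat.choose_le_choose n (by omega)
      _ ≤ 4 ^ n := Nat.choose_middle_le_pow n
  unfold rr
  rw [div_le_one (by positivity)]
  exact_mod_cast h

lemma hasSum_centralBinom {t : ℝ} (ht0 : 0 ≤ t) (ht1 : t < 1 / 2) :
    HasSum (fun n : ℕ => (Nat.centralBinom n : ℝ) * (t * (1 - t)) ^ n) (1 / (1 - 2 * t)) := by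
  set y : ℝ := t * (1 - t) with hy
  have hy0 : 0 ≤ y := by nlinarith
  have h2t : 0 < 1 - 2 * t := by linarith
  have h4y : 1 - 4 * y = (1 - 2 * t) ^ 2 := by ring
  have h4y1 : 4 * y < 1 := by nlinarith
  have hb : ∀ n : ℕ, (Nat.centralBinom n : ℝ) * y ^ n = rr n * (4 * y) ^ n := by
    intro n
    simp only [rr, hy, mul_pow]
    field_simp
  have hsummable : Summable (fun n : ℕ => rr n * (4 * y) ^ n) := by
    have hy4 : (0:ℝ) ≤ 4 * y := by linarith
    apply Summable.of_nonneg_of_le (fun n => mul_nonneg (rr_nonneg n) (pow_nonneg hy4 n))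
      (fun n => ?_) (summable_geometric_of_lt_one hy4 h4y1)
    calc rr n * (4*y) ^ n ≤ 1 * (4*y) ^ n :=
          mul_le_mul_of_nonneg_right (rr_le_one n) (pow_nonneg hy4 n)
      _ = (4*y)^n := one_mul _
  set L : ℝ := ∑' n, rr n * (4 * y) ^ n with hL
  have hLsum : HasSum (fun n => rr n * (4 * y) ^ n) L := hsummable.hasSum
  -- L ≥ first term = 1
  have hL1 : 1 ≤ L := by
    have := Summable.sum_le_tsum {0} (fun n _ => mul_nonneg (rr_nonneg n)
      (pow_nonneg (by linarith : (0:ℝ) ≤ 4 * y) n)) hsummable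
    simpa [rr, Nat.centralBinom, hL] using this
  -- Cauchy product
  have hnorm : Summable fun n => ‖rr n * (4 * y) ^ n‖ := by
    refine hsummable.congr fun n => ?_
    exact (Real.norm_of_nonneg (mul_nonneg (rr_nonneg n)
      (pow_nonneg (by linarith : (0:ℝ) ≤ 4 * y) n))).symm
  have hsq : L * L = ∑' m : ℕ, ∑ i ∈ range (m + 1), (rr i * (4*y)^i) * (rr (m - i) * (4*y)^(m-i)) := by
    exact tsum_mul_tsum_eq_tsum_sum_range_of_summable_norm hnorm hnorm
  have hgeo : HasSum (fun m : ℕ => (4*y)^m) (1/(1-4*y)) := by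
    simpa [one_div] using hasSum_geometric_of_lt_one (by linarith : (0:ℝ) ≤ 4 * y) h4y1
  have hsq2 : L * L = 1 / (1 - 4 * y) := by
    rw [hsq, ← hgeo.tsum_eq]
    congr 1
    funext m
    calc ∑ i ∈ range (m + 1), (rr i * (4*y)^i) * (rr (m - i) * (4*y)^(m-i))
        = ∑ i ∈ range (m + 1), (rr i * rr (m - i)) * (4*y)^m := by
          refine Finset.sum_congr rfl ?_
          intro i hi
          have hi' : i ≤ m := Nat.lt_succ_iff.mp (Finset.mem_range.mp hi)
          rw [mul_mul_mul_comm, ← pow_add, Nat.add_sub_cancel' hi']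
      _ = (4*y)^m := by rw [← Finset.sum_mul, rr_conv, one_mul]
  have hLval : L = 1 / (1 - 2 * t) := by
    have hpos : 0 < 1 / (1 - 2*t) := by positivity
    have key : (L - 1/(1-2*t)) * (L + 1/(1-2*t)) = 0 := by
      have : (1/(1-2*t)) * (1/(1-2*t)) = 1/(1-4*y) := by
        rw [h4y]; field_simp
      nlinarith [hsq2, this]
    rcases mul_eq_zero.mp key with h | h
    · linarith
    · linarith
  have := hLsum
  rw [hLval] at this
  convert this using 2 with n
  rw [hb]

lemma centralBinom_succ_eq (n : ℕ) :
    Nat.centralBinom (n + 1) = 2 * Nat.choose (2 * n + 1) n := by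
  have h1 : Nat.centralBinom (n + 1) = (2 * n + 1 + 1).choose (n + 1) := by
    unfold Nat.centralBinom; congr 1
  have h2 : (2 * n + 1 + 1).choose (n + 1) = (2*n+1).choose n + (2*n+1).choose (n+1) :=
    Nat.choose_succ_succ' (2*n+1) n ▸ rfl
  have h3 : (2*n+1).choose (n+1) = (2*n+1).choose n := by
    have := Nat.choose_symm (show n ≤ 2*n+1 by omega)
    rwa [show 2*n+1-n = n+1 by omega] at this
  omega

lemma hasSum_deriv_term {t : ℝ} (ht0 : 0 < t) (ht1 : t < 1 / 2) :
    HasSum (fun n : ℕ => ((2 * n + 1).choose n : ℝ) * (t * (1 - t)) ^ n * (1 - 2 * t))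
      (1 / (1 - t)) := by
  have h := hasSum_centralBinom ht0.le ht1
  set y : ℝ := t * (1 - t) with hy
  have hy0 : 0 < y := by nlinarith
  have h2t : 0 < 1 - 2 * t := by linarith
  have h1t : 0 < 1 - t := by linarith
  have hshift := (hasSum_nat_add_iff' (f := fun n => (Nat.centralBinom n : ℝ) * y ^ n) 1).mpr h
  simp only [Finset.range_one, Finset.sum_singleton, Nat.centralBinom_zero, Nat.cast_one,
    pow_zero, mul_one] at hshift
  set c : ℝ := (1 - 2 * t) / (2 * y) with hc
  have h2 := hshift.mul_left c
  have hval : c * (1 / (1 - 2 * t) - 1) = 1 / (1 - t) := by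
    rw [hc, hy]
    field_simp
    ring
  rw [hval] at h2
  refine h2.congr_fun fun n => ?_
  have hcb : (Nat.centralBinom (n + 1) : ℝ) = 2 * ((2 * n + 1).choose n : ℝ) := by
    exact_mod_cast centralBinom_succ_eq n
  rw [hcb, pow_succ]
  rw [hc]
  field_simp

lemma integral_term {k : ℝ} (hk0 : 0 ≤ k) (hk1 : k < 1 / 2) (n : ℕ) :
    ∫ t in Set.Ioc 0 k, ((2 * n + 1).choose n : ℝ) * (t * (1 - t)) ^ n * (1 - 2 * t)
      = ((2 * n + 1).choose n : ℝ) * (k * (1 - k)) ^ (n + 1) / (n + 1) := by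
  have hInt : ∫ t in (0:ℝ)..k, ((2 * n + 1).choose n : ℝ) * (t * (1 - t)) ^ n * (1 - 2 * t)
      = ((2 * n + 1).choose n : ℝ) * (k * (1 - k)) ^ (n + 1) / (n + 1) := by
    set C : ℝ := ((2 * n + 1).choose n : ℝ) with hC
    have key : ∀ t : ℝ, HasDerivAt (fun s : ℝ => C * (s * (1 - s)) ^ (n + 1) / (n + 1))
        (C * (t * (1 - t)) ^ n * (1 - 2 * t)) t := by
      intro t
      have h1 : HasDerivAt (fun s : ℝ => s * (1 - s)) (1 - 2 * t) t := by
        exact ((hasDerivAt_id' t).mul ((hasDerivAt_id' t).const_sub 1)).congr_deriv (by ring)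
      have h2 := (h1.pow (n + 1)).const_mul C
      have h3 := h2.div_const ((n : ℝ) + 1)
      exact h3.congr_deriv (by rw [Nat.add_sub_cancel]; push_cast; field_simp)
    have hcont : Continuous fun t : ℝ => C * (t * (1 - t)) ^ n * (1 - 2 * t) := by fun_prop
    have := intervalIntegral.integral_eq_sub_of_hasDerivAt
      (f := fun s : ℝ => C * (s * (1 - s)) ^ (n + 1) / (n + 1))
      (fun x _ => key x) (hcont.intervalIntegrable 0 k)
    rw [this]
    norm_num
  rw [← hInt, intervalIntegral.integral_of_le hk0]

lemma choose_le_four_pow (n : ℕ) : ((2 * n + 1).choose n : ℝ) ≤ 4 ^ n := by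
  exact_mod_cast Nat.cast_le.mpr (Nat.choose_middle_le_pow n)

lemma summable_I {k : ℝ} (hk0 : 0 ≤ k) (hk1 : k < 1 / 2) :
    Summable (fun n : ℕ => ((2 * n + 1).choose n : ℝ) * (k * (1 - k)) ^ (n + 1) / (n + 1)) := by
  set x : ℝ := k * (1 - k) with hx
  have hx0 : 0 ≤ x := by nlinarith
  have h4x : 4 * x < 1 := by nlinarith
  have hx4 : (0:ℝ) ≤ 4 * x := by linarith
  apply Summable.of_nonneg_of_le
  · intro n; positivity
  · intro n
    show ((2 * n + 1).choose n : ℝ) * x ^ (n + 1) / (n + 1) ≤ x * (4 * x) ^ n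
    have h1 : ((2 * n + 1).choose n : ℝ) * x ^ (n + 1) / (n + 1) ≤ 4 ^ n * x ^ (n + 1) := by
      rw [div_le_iff₀ (by positivity)]
      calc ((2 * n + 1).choose n : ℝ) * x ^ (n + 1) ≤ 4 ^ n * x ^ (n + 1) :=
            mul_le_mul_of_nonneg_right (choose_le_four_pow n) (by positivity)
        _ ≤ 4 ^ n * x ^ (n + 1) * (n + 1) := by
            nlinarith [mul_nonneg (pow_nonneg (by norm_num : (0:ℝ) ≤ 4) n)
              (pow_nonneg hx0 (n+1)), Nat.cast_nonneg (α := ℝ) n]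
    calc ((2 * n + 1).choose n : ℝ) * x ^ (n + 1) / (n + 1) ≤ 4 ^ n * x ^ (n + 1) := h1
      _ = x * (4 * x) ^ n := by
            have : ∀ a : ℝ, 4 ^ n * a ^ (n + 1) = a * (4 * a) ^ n := fun a => by
              rw [mul_pow, pow_succ]; ring
            exact this x
  · exact (summable_geometric_of_lt_one hx4 h4x).mul_left x

lemma tsum_I_eq {k : ℝ} (hk0 : 0 ≤ k) (hk1 : k < 1 / 2) :
    ∑' n : ℕ, ((2 * n + 1).choose n : ℝ) * (k * (1 - k)) ^ (n + 1) / (n + 1)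
      = -Real.log (1 - k) := by
  set g : ℕ → ℝ → ℝ := fun n t => ((2 * n + 1).choose n : ℝ) * (t * (1 - t)) ^ n * (1 - 2 * t)
    with hg
  have hgcont : ∀ n, Continuous (g n) := by intro n; simp only [hg]; fun_prop
  have hmeas : ∀ n, AEStronglyMeasurable (g n) (volume.restrict (Set.Ioc 0 k)) := fun n =>
    (hgcont n).aestronglyMeasurable
  have hgnonneg : ∀ n, ∀ t ∈ Set.Ioc (0:ℝ) k, 0 ≤ g n t := by
    intro n t ht
    obtain ⟨ht0, htk⟩ := ht
    have h1 : 0 ≤ t * (1 - t) := by nlinarith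
    have h2 : 0 ≤ 1 - 2 * t := by linarith
    positivity
  have hgint : ∀ n, IntegrableOn (g n) (Set.Ioc 0 k) volume :=
    fun n => (hgcont n).integrableOn_Ioc
  -- the lintegral bound
  have hlin : ∀ n, ∫⁻ t in Set.Ioc 0 k, ‖g n t‖ₑ ∂volume
      = ENNReal.ofReal (((2 * n + 1).choose n : ℝ) * (k * (1 - k)) ^ (n + 1) / (n + 1)) := by
    intro n
    rw [← ofReal_integral_norm_eq_lintegral_enorm (hgint n)]
    congr 1
    rw [← integral_term hk0 hk1 n]
    refine setIntegral_congr_fun measurableSet_Ioc fun t ht => ?_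
    exact Real.norm_of_nonneg (hgnonneg n t ht)
  have hfin : ∑' n, ∫⁻ t in Set.Ioc 0 k, ‖g n t‖ₑ ∂volume ≠ ⊤ := by
    simp_rw [hlin]
    have hx0 : 0 ≤ k * (1 - k) := by nlinarith
    rw [← ENNReal.ofReal_tsum_of_nonneg (fun n => div_nonneg (mul_nonneg (Nat.cast_nonneg _)
      (pow_nonneg hx0 _)) (by positivity)) (summable_I hk0 hk1)]
    exact ENNReal.ofReal_ne_top
  have hswap := integral_tsum hmeas hfin
  have hI : ∀ n, ∫ a in Set.Ioc 0 k, g n a = ((2 * n + 1).choose n : ℝ) * (k * (1 - k)) ^ (n + 1) / (n + 1) :=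
    fun n => integral_term hk0 hk1 n
  simp_rw [hI] at hswap
  rw [← hswap]
  -- the integrand sums to 1/(1-t) on Ioc
  have hptw : ∀ t ∈ Set.Ioc (0:ℝ) k, ∑' n, g n t = (1 - t)⁻¹ := by
    intro t ht
    obtain ⟨ht0, htk⟩ := ht
    have := (hasSum_deriv_term ht0 (lt_of_le_of_lt htk hk1)).tsum_eq
    rw [hg]
    simpa [one_div] using this
  have heq : ∫ t in Set.Ioc 0 k, (∑' n, g n t) ∂volume
      = ∫ t in Set.Ioc 0 k, (1 - t)⁻¹ ∂volume :=
    setIntegral_congr_fun measurableSet_Ioc hptw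
  rw [heq, ← intervalIntegral.integral_of_le hk0]
  -- FTC for -log(1-t)
  have hderiv : ∀ t ∈ Set.uIcc (0:ℝ) k, HasDerivAt (fun s : ℝ => -Real.log (1 - s)) (1 - t)⁻¹ t := by
    intro t ht
    rw [Set.uIcc_of_le hk0] at ht
    have hne : 1 - t ≠ 0 := by
      obtain ⟨h1, h2⟩ := ht
      have : t < 1 := lt_of_le_of_lt h2 (by linarith)
      linarith
    have h1 : HasDerivAt (fun s : ℝ => 1 - s) (-1) t := by
      simpa using (hasDerivAt_id t).const_sub 1
    have h2 := (h1.log hne).neg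
    exact h2.congr_deriv (by ring)
  have hcont : ContinuousOn (fun t : ℝ => (1 - t)⁻¹) (Set.uIcc 0 k) := by
    apply ContinuousOn.inv₀ (by fun_prop)
    intro t ht
    rw [Set.uIcc_of_le hk0] at ht
    obtain ⟨h1, h2⟩ := ht
    have : t < 1 := lt_of_le_of_lt h2 (by linarith)
    linarith
  have := intervalIntegral.integral_eq_sub_of_hasDerivAt (fun t ht => hderiv t ht)
    (hcont.intervalIntegrable)
  rw [this]
  simp

/-- For real numbers `d, e` and every real `k` with `0 ≤ k < 1/2`,
the series `S(k) = Σ_{n≥1} ((k(1−k))ⁿ/n)·(−C(2n−1,n−1)·d + (4^{n−1} − C(2n−1,n−1))·e)`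
converges and `exp(S(k)) = (1−k)^{e+d}·(1−2k)^{−e/2}` (real powers of positive reals).
(The `n = 0` term vanishes since division by `0` gives `0` in `ℝ`.) -/
theorem statement12 (d e : ℝ) (k : ℝ) (hk0 : 0 ≤ k) (hk1 : k < 1 / 2) :
    ∃ S : ℝ,
      HasSum (fun n : ℕ => ((k * (1 - k)) ^ n / (n : ℝ)) *
          (-(Nat.choose (2 * n - 1) (n - 1) : ℝ) * d +
            ((4 : ℝ) ^ (n - 1) - (Nat.choose (2 * n - 1) (n - 1) : ℝ)) * e)) S ∧
      Real.exp S = (1 - k) ^ (e + d) * (1 - 2 * k) ^ (-(e / 2)) := by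
  have h1k : 0 < 1 - k := by linarith
  have h12k : 0 < 1 - 2 * k := by linarith
  have hx0 : 0 ≤ k * (1 - k) := by nlinarith
  have h4x : |4 * (k * (1 - k))| < 1 := by
    rw [abs_of_nonneg (by linarith)]
    nlinarith
  -- HasSum u (-log (1-k))
  set u : ℕ → ℝ := fun n => (Nat.choose (2 * n - 1) (n - 1) : ℝ) * ((k * (1 - k)) ^ n / n)
    with hu_def
  have hu : HasSum u (-Real.log (1 - k)) := by
    have hshift : HasSum (fun n : ℕ => u (n + 1)) (-Real.log (1 - k)) := by
      have h1 : HasSum (fun n : ℕ => ((2 * n + 1).choose n : ℝ) * (k * (1 - k)) ^ (n + 1) / (n + 1))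
          (-Real.log (1 - k)) := (Summable.hasSum_iff (summable_I hk0 hk1)).mpr (tsum_I_eq hk0 hk1)
      refine h1.congr_fun fun n => ?_
      simp only [hu_def]
      rw [show 2 * (n + 1) - 1 = 2 * n + 1 by omega, show n + 1 - 1 = n by omega]
      push_cast
      rw [mul_div_assoc]
    have hsum0 : ∑ i ∈ Finset.range 1, u i = 0 := by simp [hu_def]
    refine (hasSum_nat_add_iff' 1).mp ?_
    rw [hsum0, sub_zero]
    exact hshift
  -- HasSum v (-(1/2) log (1-2k))
  set v : ℕ → ℝ := fun n => (4 : ℝ) ^ (n - 1) * ((k * (1 - k)) ^ n / n) with hv_def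
  have hv : HasSum v (-(1 / 2) * Real.log (1 - 2 * k)) := by
    have hlog : Real.log (1 - 4 * (k * (1 - k))) = 2 * Real.log (1 - 2 * k) := by
      rw [show 1 - 4 * (k * (1 - k)) = (1 - 2 * k) ^ 2 by ring, Real.log_pow]
      norm_num
    have h1 := (Real.hasSum_pow_div_log_of_abs_lt_one h4x).mul_left (1 / 4)
    have hval : 1 / 4 * -Real.log (1 - 4 * (k * (1 - k))) = -(1 / 2) * Real.log (1 - 2 * k) := by
      rw [hlog]; ring
    rw [hval] at h1
    have hshift : HasSum (fun n : ℕ => v (n + 1)) (-(1 / 2) * Real.log (1 - 2 * k)) := by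
      refine h1.congr_fun fun n => ?_
      simp only [hv_def]
      rw [show n + 1 - 1 = n by omega]
      have key : ∀ a : ℝ, (4:ℝ) ^ n * (a ^ (n+1) / ((n:ℝ)+1)) = 1/4 * ((4*a) ^ (n+1) / ((n:ℝ)+1)) :=
        fun a => by rw [mul_pow, pow_succ]; ring
      push_cast
      exact key _
    have hsum0 : ∑ i ∈ Finset.range 1, v i = 0 := by simp [hv_def]
    refine (hasSum_nat_add_iff' 1).mp ?_
    rw [hsum0, sub_zero]
    exact hshift
  refine ⟨-(d + e) * -Real.log (1 - k) + e * (-(1 / 2) * Real.log (1 - 2 * k)), ?_, ?_⟩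
  · have h := (hu.mul_left (-(d + e))).add (hv.mul_left e)
    refine h.congr_fun fun n => ?_
    simp only [hu_def, hv_def]
    ring
  · rw [Real.rpow_def_of_pos h1k, Real.rpow_def_of_pos h12k, ← Real.exp_add]
    congr 1
    ring
end
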